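/- arXiv:2110.15809 — 3 statements merged into one kernel-verified Lean document; each statement's English description precedes it below -/
import Mathlib

section
/- In the base graph G₀ on layers 0,...,D with vertex set (Z/(3Dr)Z)^d per layer and edges v_x^i → v_{x+γ}^{i+1} for γ ∈ V_d⁺(r), the path v_x^0, v_{x+γ}^1, ..., v_{x+Dγ}^D is the unique path from v_x^0 to v_{x+Dγ}^D, for every x and every γ ∈ V_d⁺(r). -/
/-- `V_d⁺(r)`: lattice points of `ℤ^d` with nonnegative coordinates that are vertices
(extreme points) of the convex hull of `{p ∈ ℤ^d : ‖p‖ ≤ r}`. -/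
def Vdplus (d r : ℕ) : Set (Fin d → ℤ) :=
  {γ | (∀ i, 0 ≤ γ i) ∧
    (fun i => (γ i : ℝ)) ∈ Set.extremePoints ℝ (convexHull ℝ
      {x : Fin d → ℝ | ∃ q : Fin d → ℤ,
        (∑ i, (q i : ℝ) ^ 2) ≤ (r : ℝ) ^ 2 ∧ x = fun i => (q i : ℝ)})}

/-! Along any path of the base graph the endpoint is `x + ∑ₖ stepₖ` mod `3Dr`, and it is assumed to
be `x + Dγ`. Every coordinate of both `∑ₖ stepₖ` and `Dγ` lies in `[0, Dr]`, so the congruence is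
an equality in `ℤ^d`. Thus the extreme point `γ` of the hull is the mean of the `D` steps, which lie
in the hull, and this forces every step to be `γ`. -/

open Finset

theorem Convex.eq_of_sum_eq_card_nsmul_of_mem_extremePoints {𝕜 E ι : Type*} [Field 𝕜]
    [LinearOrder 𝕜] [IsStrictOrderedRing 𝕜] [AddCommGroup E] [Module 𝕜 E] {A : Set E} {g : E}
    (hA : Convex 𝕜 A) (hg : g ∈ A.extremePoints 𝕜) {s : Finset ι} {f : ι → E}
    (hf : ∀ k ∈ s, f k ∈ A) (hsum : ∑ k ∈ s, f k = #s • g) : ∀ k ∈ s, f k = g := by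
  classical
  by_contra! ⟨k, hk, hne⟩
  set t := s.filter (f · ≠ g)
  have ht : 0 < #t := card_pos.2 ⟨k, mem_filter.2 ⟨hk, hne⟩⟩
  have hsum_t : ∑ i ∈ t, f i = #t • g := by
    have hrest : ∑ i ∈ s.filter (¬ f · ≠ g), f i = #(s.filter (¬ f · ≠ g)) • g := by
      rw [← sum_const]; exact sum_congr rfl fun i hi => not_not.1 (mem_filter.1 hi).2
    rw [← sum_filter_add_sum_filter_not s (f · ≠ g), hrest,
      ← card_filter_add_card_filter_not (s := s) (f · ≠ g), add_nsmul] at hsum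
    exact add_right_cancel hsum
  -- Removing an extreme point leaves a convex set, which must contain the mean of the `f i ≠ g`.
  have hmean : ∑ i ∈ t, (#t : 𝕜)⁻¹ • f i ∈ A \ {g} :=
    ((hA.mem_extremePoints_iff_convex_sdiff.1 hg).2).sum_mem (fun _ _ => by positivity)
      (by rw [sum_const, nsmul_eq_mul]; field_simp)
      (fun i hi => ⟨hf i (mem_filter.1 hi).1, (mem_filter.1 hi).2⟩)
  rw [← smul_sum, hsum_t, ← Nat.cast_smul_eq_nsmul 𝕜, smul_smul, inv_mul_cancel₀ (by positivity),
    one_smul] at hmean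
  exact hmean.2 rfl

theorem Fin.apply_last_eq_apply_zero_add_sum {M : Type*} [AddCommMonoid M] :
    ∀ {n : ℕ} {z : Fin (n + 1) → M} {f : Fin n → M},
      (∀ k, z k.succ = z k.castSucc + f k) → z (last n) = z 0 + ∑ k, f k
  | 0, _, _, _ => by simp
  | n + 1, z, f, h => by
    have ih := apply_last_eq_apply_zero_add_sum (z := z ∘ castSucc) (f := f ∘ castSucc)
      fun k => by simpa using h k.castSucc
    simp only [Function.comp_apply, castSucc_zero] at ih
    rw [Fin.sum_univ_castSucc, ← add_assoc, ← ih, ← succ_last]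
    exact h (last n)

theorem ZMod.intCast_injOn_Ico (N : ℕ) :
    Set.InjOn (Int.cast : ℤ → ZMod N) (Set.Ico (0 : ℤ) N) := by
  intro a ⟨ha₀, ha⟩ b ⟨hb₀, hb⟩ hab
  rwa [ZMod.intCast_eq_intCast_iff', Int.emod_eq_of_lt ha₀ ha, Int.emod_eq_of_lt hb₀ hb] at hab

section Vdplus

variable {d r : ℕ} {γ : Fin d → ℤ}

theorem le_of_mem_Vdplus (hγ : γ ∈ Vdplus d r) (j : Fin d) : γ j ≤ r := by
  obtain ⟨q, hq, hqγ⟩ := extremePoints_convexHull_subset hγ.2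
  obtain rfl : q = γ := funext fun i => by exact_mod_cast (congrFun hqγ i).symm
  have hsq : q j ^ 2 ≤ (r : ℤ) ^ 2 := by
    have hq' : ∑ i, q i ^ 2 ≤ (r : ℤ) ^ 2 := by exact_mod_cast hq
    exact (single_le_sum (fun i _ => sq_nonneg (q i)) (mem_univ j)).trans hq'
  exact (sq_le_sq₀ (hγ.1 j) (Nat.cast_nonneg r)).1 hsq

theorem sum_apply_mem_Icc_of_mem_Vdplus {ι : Type*} {s : Finset ι} {step : ι → Fin d → ℤ}
    (hstep : ∀ k ∈ s, step k ∈ Vdplus d r) (j : Fin d) :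
    ∑ k ∈ s, step k j ∈ Set.Icc (0 : ℤ) (#s * r) := by
  refine ⟨sum_nonneg fun k hk => (hstep k hk).1 j, ?_⟩
  simpa using sum_le_sum fun k hk => le_of_mem_Vdplus (hstep k hk) j

theorem eq_of_sum_eq_card_nsmul_of_mem_Vdplus {ι : Type*} {s : Finset ι}
    {step : ι → Fin d → ℤ} (hγ : γ ∈ Vdplus d r) (hstep : ∀ k ∈ s, step k ∈ Vdplus d r)
    (hsum : ∑ k ∈ s, step k = #s • γ) : ∀ k ∈ s, step k = γ := by
  let toReal : (Fin d → ℤ) →+ (Fin d → ℝ) := (Int.castAddHom ℝ).compLeft (Fin d)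
  have hsumReal : ∑ k ∈ s, toReal (step k) = #s • toReal γ := by
    rw [← map_sum, hsum, map_nsmul]
  intro k hk
  exact Int.cast_injective.comp_left <|
    (convex_convexHull ℝ _).eq_of_sum_eq_card_nsmul_of_mem_extremePoints hγ.2
      (fun k hk => extremePoints_subset (hstep k hk).2) hsumReal k hk

end Vdplus

theorem stmt5_general (D r d : ℕ) (hD : 0 < D) (hr : 0 < r)
    (x : Fin d → ZMod (3 * D * r)) (γ : Fin d → ℤ) (hγ : γ ∈ Vdplus d r)
    (z : Fin (D + 1) → Fin d → ZMod (3 * D * r))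
    (step : Fin D → Fin d → ℤ) (hstep : ∀ k, step k ∈ Vdplus d r)
    (hz0 : z 0 = x)
    (hzD : z (Fin.last D) = fun i => x i + (((D : ℤ) * γ i : ℤ) : ZMod (3 * D * r)))
    (hpath : ∀ k : Fin D,
      z k.succ = fun i => z k.castSucc i + ((step k i : ℤ) : ZMod (3 * D * r))) :
    ∀ i : Fin (D + 1), z i = fun j => x j + ((((i : ℕ) : ℤ) * γ j : ℤ) : ZMod (3 * D * r)) := by
  have hDr : (D * r : ℤ) < (3 * D * r : ℕ) := by push_cast; nlinarith [mul_pos hD hr]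
  have hsum : ∑ k, step k = ∑ _k : Fin D, γ := by
    funext j
    have hlast := congrFun (Fin.apply_last_eq_apply_zero_add_sum hpath) j
    simp only [hzD, hz0, Pi.add_apply, Finset.sum_apply, add_right_inj] at hlast
    have hstepj := sum_apply_mem_Icc_of_mem_Vdplus (fun k _ => hstep k) (s := univ) j
    have hγj := sum_apply_mem_Icc_of_mem_Vdplus (fun _ _ => hγ) (s := (univ : Finset (Fin D))) j
    simp only [card_univ, Fintype.card_fin] at hstepj hγj
    rw [Finset.sum_apply, Finset.sum_apply]
    refine ZMod.intCast_injOn_Ico _ ⟨hstepj.1, hstepj.2.trans_lt hDr⟩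
      ⟨hγj.1, hγj.2.trans_lt hDr⟩ ?_
    push_cast
    rw [← hlast]
    simp
  have hsteps : ∀ k, step k = γ := fun k =>
    eq_of_sum_eq_card_nsmul_of_mem_Vdplus hγ (fun k _ => hstep k) (by simpa using hsum) k
      (mem_univ k)
  intro i
  induction i using Fin.induction with
  | zero => simpa using hz0
  | succ k ih =>
    rw [hpath, ih, hsteps]
    funext j
    simp only [Fin.val_succ, Fin.val_castSucc]
    push_cast
    ring

/-- In the base graph `G₀` (layers `0..D`, each layer a copy of
`(ℤ/(3Dr)ℤ)^d`, edges from `v_x^i` to `v_{x+γ}^{i+1}` for `γ ∈ V_d⁺(r)`), every path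
from `v_x^0` to `v_{x+Dγ}^D` is the critical path: its vertex in layer `i` is
`v_{x+iγ}^i`. -/
theorem stmt5 (D r d : ℕ) (hD : 0 < D) (hr : 0 < r) (hd : 0 < d)
    (x : Fin d → ZMod (3 * D * r)) (γ : Fin d → ℤ) (hγ : γ ∈ Vdplus d r)
    (z : Fin (D + 1) → Fin d → ZMod (3 * D * r))
    (step : Fin D → Fin d → ℤ) (hstep : ∀ k, step k ∈ Vdplus d r)
    (hz0 : z 0 = x)
    (hzD : z (Fin.last D) = fun i => x i + (((D : ℤ) * γ i : ℤ) : ZMod (3 * D * r)))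
    (hpath : ∀ k : Fin D,
      z k.succ = fun i => z k.castSucc i + ((step k i : ℤ) : ZMod (3 * D * r))) :
    ∀ i : Fin (D + 1), z i = fun j => x j + ((((i : ℕ) : ℤ) * γ j : ℤ) : ZMod (3 * D * r)) :=
  stmt5_general D r d hD hr x γ hγ z step hstep hz0 hzD hpath
end

section
/- In the alternation product graph G_alt², any two distinct critical paths intersect in at most a single vertex or a single edge; equivalently, two distinct critical paths cannot share two vertices lying in layers i and j with |i − j| ≥ 2. -/
/-!
Coordinate 1 of a critical path moves only at even steps, by `γ₁`, and coordinate 3 only at odd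
steps, by `γ'₂`. Between layers `i` and `j ≥ i + 2` each kind of step occurs at least once and at
most `D` times, so two critical paths through the same vertices in layers `i` and `j` satisfy
`k γ₁ ≡ k η₁` and `k' γ'₂ ≡ k' η'₂` modulo `3Dr` with `1 ≤ k, k' ≤ D`; both sides lie in
`[0, Dr]`, hence `γ₁ = η₁` and `γ'₂ = η'₂`. No two points of `V₂⁺(r)` share a coordinate: a
point `(a, b)` with `0 ≤ b < c` lies strictly between the lattice points `(a, ±c)` of the disk,
so it is not an extreme point. Thus `γ = η`, `γ' = η'`, and then the start vertices agree.
-/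

/-- `V₂⁺(r)`: lattice points of `ℤ²` with nonnegative coordinates that are vertices
(extreme points) of the convex hull of the lattice points in the disk of radius `r`. -/
def V2plus (r : ℕ) : Set (ℤ × ℤ) :=
  {p : ℤ × ℤ | 0 ≤ p.1 ∧ 0 ≤ p.2 ∧
    ((p.1 : ℝ), (p.2 : ℝ)) ∈ Set.extremePoints ℝ (convexHull ℝ
      {x : ℝ × ℝ | ∃ q : ℤ × ℤ, (q.1 : ℝ) ^ 2 + (q.2 : ℝ) ^ 2 ≤ (r : ℝ) ^ 2 ∧
        x = ((q.1 : ℝ), (q.2 : ℝ))})}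

/-- The layer-`i` vertex of the critical path of `G_alt²` determined by start vertex
`x ∈ (ℤ/(3Dr)ℤ)³` and step vectors `g, g' ∈ V₂⁺(r)`: after `i` layers, `⌈i/2⌉` even
steps have added `g` to coordinates `(1,2)` and `⌊i/2⌋` odd steps have added `g'` to
coordinates `(2,3)`. -/
def cv2 (M : ℕ) (x : Fin 3 → ZMod M) (g g' : ℤ × ℤ) (i : ℕ) : Fin 3 → ZMod M :=
  ![x 0 + (((((i + 1) / 2 : ℕ) : ℤ) * g.1 : ℤ) : ZMod M),
    x 1 + (((((i + 1) / 2 : ℕ) : ℤ) * g.2 + (((i / 2 : ℕ) : ℤ)) * g'.1 : ℤ) : ZMod M),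
    x 2 + ((((i / 2 : ℕ) : ℤ) * g'.2 : ℤ) : ZMod M)]

lemma add_smul_mem_openSegment {E : Type*} [AddCommGroup E] [Module ℝ E] (p v : E) {t : ℝ}
    (ht : |t| < 1) : p + t • v ∈ openSegment ℝ (p - v) (p + v) := by
  rw [openSegment_eq_image']
  obtain ⟨ht₁, ht₂⟩ := abs_lt.mp ht
  refine ⟨(1 + t) / 2, ⟨by linarith, by linarith⟩, ?_⟩
  module

lemma Int.eq_zero_of_dvd_of_two_mul_abs_le {m n : ℤ} (h : m ∣ n) (hn : 2 * |n| ≤ m) : n = 0 := by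
  by_contra hne
  exact hne (Int.eq_zero_of_abs_lt_dvd h (by linarith [abs_pos.mpr hne]))

lemma ZMod.eq_of_intCast_mul_eq {M : ℕ} {k a b : ℤ} (hk : k ≠ 0) (hM : 2 * |k * (a - b)| ≤ M)
    (h : ((k * a : ℤ) : ZMod M) = ((k * b : ℤ) : ZMod M)) : a = b := by
  rw [ZMod.intCast_eq_intCast_iff_dvd_sub] at h
  have hdvd : (M : ℤ) ∣ k * (a - b) := by
    rwa [← dvd_neg, neg_mul_eq_mul_neg, neg_sub, mul_sub]
  have := Int.eq_zero_of_dvd_of_two_mul_abs_le hdvd hM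
  exact sub_eq_zero.mp ((mul_eq_zero.mp this).resolve_left hk)

def latticeDisk (r : ℕ) : Set (ℝ × ℝ) :=
  {x : ℝ × ℝ | ∃ q : ℤ × ℤ, (q.1 : ℝ) ^ 2 + (q.2 : ℝ) ^ 2 ≤ (r : ℝ) ^ 2 ∧
    x = ((q.1 : ℝ), (q.2 : ℝ))}

lemma intCast_mem_latticeDisk_iff {r : ℕ} {a b : ℤ} :
    ((a : ℝ), (b : ℝ)) ∈ latticeDisk r ↔ a ^ 2 + b ^ 2 ≤ (r : ℤ) ^ 2 := by
  constructor
  · rintro ⟨q, hq, hqab⟩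
    simp only [Prod.mk.injEq, Int.cast_inj] at hqab
    obtain ⟨rfl, rfl⟩ := hqab
    exact_mod_cast hq
  · intro hab
    exact ⟨(a, b), by exact_mod_cast hab, rfl⟩

lemma swap_mem_latticeDisk {r : ℕ} {x : ℝ × ℝ} (hx : x ∈ latticeDisk r) :
    x.swap ∈ latticeDisk r := by
  obtain ⟨q, hq, rfl⟩ := hx
  exact ⟨q.swap, by simpa only [Prod.fst_swap, Prod.snd_swap, add_comm] using hq, rfl⟩

lemma mem_V2plus_iff {r : ℕ} {g : ℤ × ℤ} : g ∈ V2plus r ↔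
    0 ≤ g.1 ∧ 0 ≤ g.2 ∧
      ((g.1 : ℝ), (g.2 : ℝ)) ∈ Set.extremePoints ℝ (convexHull ℝ (latticeDisk r)) :=
  Iff.rfl

namespace V2plus

variable {r : ℕ} {g h : ℤ × ℤ}

lemma sq_add_sq_le (hg : g ∈ V2plus r) : g.1 ^ 2 + g.2 ^ 2 ≤ (r : ℤ) ^ 2 :=
  intCast_mem_latticeDisk_iff.mp
    (extremePoints_convexHull_subset (mem_V2plus_iff.mp hg).2.2)

lemma fst_le (hg : g ∈ V2plus r) : g.1 ≤ r := by
  nlinarith [sq_add_sq_le hg, hg.1, sq_nonneg g.2]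

lemma swap_mem (hg : g ∈ V2plus r) : g.swap ∈ V2plus r := by
  obtain ⟨hg₁, hg₂, hgE⟩ := mem_V2plus_iff.mp hg
  let σ := LinearEquiv.prodComm ℝ ℝ ℝ
  have hσ : σ '' latticeDisk r = latticeDisk r := by
    refine Set.Subset.antisymm ?_ fun x hx => ⟨x.swap, swap_mem_latticeDisk hx, x.swap_swap⟩
    rintro _ ⟨x, hx, rfl⟩
    exact swap_mem_latticeDisk hx
  have hE : σ '' Set.extremePoints ℝ (convexHull ℝ (latticeDisk r)) =
      Set.extremePoints ℝ (convexHull ℝ (latticeDisk r)) := by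
    rw [image_extremePoints, ← σ.coe_toLinearMap, LinearMap.image_convexHull,
      σ.coe_toLinearMap, hσ]
  exact mem_V2plus_iff.mpr ⟨hg₂, hg₁, hE ▸ Set.mem_image_of_mem σ hgE⟩

lemma snd_le_of_fst_eq (hg : g ∈ V2plus r) (hh : h ∈ V2plus r) (e : g.1 = h.1) : h.2 ≤ g.2 := by
  by_contra! hlt
  have hh₂ : (0 : ℝ) < h.2 := by exact_mod_cast hg.2.1.trans_lt hlt
  have hdisk := sq_add_sq_le hh
  have hconv {b : ℤ} (hb : b ^ 2 = h.2 ^ 2) :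
      ((h.1 : ℝ), (b : ℝ)) ∈ convexHull ℝ (latticeDisk r) :=
    subset_convexHull ℝ _ (intCast_mem_latticeDisk_iff.mpr (hb ▸ hdisk))
  have hseg : ((g.1 : ℝ), (g.2 : ℝ)) ∈
      openSegment ℝ ((h.1 : ℝ), ((-h.2 : ℤ) : ℝ)) ((h.1 : ℝ), (h.2 : ℝ)) := by
    have ht : |(g.2 : ℝ) / h.2| < 1 := by
      rw [abs_div, abs_of_pos hh₂, div_lt_one hh₂, abs_lt]
      have : (0 : ℝ) ≤ g.2 := by exact_mod_cast hg.2.1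
      exact ⟨by linarith, by exact_mod_cast hlt⟩
    convert add_smul_mem_openSegment ((h.1 : ℝ), (0 : ℝ)) ((0 : ℝ), (h.2 : ℝ)) ht using 1 <;>
      ext <;> simp [e, hh₂.ne']
  have hend := (mem_V2plus_iff.mp hg).2.2.2 (hconv (neg_sq h.2)) (hconv rfl) hseg
  have : ((-h.2 : ℤ) : ℝ) = g.2 := congrArg Prod.snd hend
  have : -h.2 = g.2 := by exact_mod_cast this
  linarith [hg.2.1]

lemma eq_of_fst_eq (hg : g ∈ V2plus r) (hh : h ∈ V2plus r) (e : g.1 = h.1) : g = h :=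
  Prod.ext e (le_antisymm (snd_le_of_fst_eq hh hg e.symm) (snd_le_of_fst_eq hg hh e))

lemma eq_of_intCast_mul_fst_eq {D : ℕ} (hg : g ∈ V2plus r) (hh : h ∈ V2plus r) {k : ℤ}
    (hk : 0 < k) (hkD : k ≤ D)
    (e : ((k * g.1 : ℤ) : ZMod (3 * D * r)) = ((k * h.1 : ℤ) : ZMod (3 * D * r))) : g = h := by
  refine eq_of_fst_eq hg hh (ZMod.eq_of_intCast_mul_eq hk.ne' ?_ e)
  have hdiff : |g.1 - h.1| ≤ r := abs_sub_le_iff.mpr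
    ⟨by linarith [fst_le hg, hh.1], by linarith [fst_le hh, hg.1]⟩
  have : k * |g.1 - h.1| ≤ D * r := mul_le_mul hkD hdiff (abs_nonneg _) (by positivity)
  rw [abs_mul, abs_of_pos hk]
  push_cast
  linarith [mul_nonneg (Int.natCast_nonneg D) (Int.natCast_nonneg r)]

lemma eq_of_intCast_mul_snd_eq {D : ℕ} (hg : g ∈ V2plus r) (hh : h ∈ V2plus r) {k : ℤ}
    (hk : 0 < k) (hkD : k ≤ D)
    (e : ((k * g.2 : ℤ) : ZMod (3 * D * r)) = ((k * h.2 : ℤ) : ZMod (3 * D * r))) : g = h :=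
  Prod.swap_injective (eq_of_intCast_mul_fst_eq (swap_mem hg) (swap_mem hh) hk hkD e)

end V2plus

lemma cv2_eq_add (M : ℕ) (x : Fin 3 → ZMod M) (g g' : ℤ × ℤ) (i : ℕ) :
    cv2 M x g g' i = x + cv2 M 0 g g' i := by
  ext n
  fin_cases n <;> simp [cv2]

section CriticalPath

variable {M : ℕ} {x x' : Fin 3 → ZMod M} {g g' h h' : ℤ × ℤ} {i j : ℕ}

lemma intCast_mul_fst_eq_of_cv2_eq (h₁ : cv2 M x g g' i = cv2 M x' h h' i)
    (h₂ : cv2 M x g g' j = cv2 M x' h h' j) :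
    (((((j + 1) / 2 : ℕ) - ((i + 1) / 2 : ℕ) : ℤ) * g.1 : ℤ) : ZMod M) =
      (((((j + 1) / 2 : ℕ) - ((i + 1) / 2 : ℕ) : ℤ) * h.1 : ℤ) : ZMod M) := by
  have e₁ := congrFun h₁ 0
  have e₂ := congrFun h₂ 0
  simp only [cv2, Matrix.cons_val_zero] at e₁ e₂
  push_cast at e₁ e₂ ⊢
  linear_combination e₂ - e₁

lemma intCast_mul_snd_eq_of_cv2_eq (h₁ : cv2 M x g g' i = cv2 M x' h h' i)
    (h₂ : cv2 M x g g' j = cv2 M x' h h' j) :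
    ((((j / 2 : ℕ) - (i / 2 : ℕ) : ℤ) * g'.2 : ℤ) : ZMod M) =
      ((((j / 2 : ℕ) - (i / 2 : ℕ) : ℤ) * h'.2 : ℤ) : ZMod M) := by
  have e₁ := congrFun h₁ 2
  have e₂ := congrFun h₂ 2
  simp only [cv2, Matrix.cons_val_two, Matrix.tail_cons, Matrix.head_cons] at e₁ e₂
  push_cast at e₁ e₂ ⊢
  linear_combination e₂ - e₁

end CriticalPath

theorem stmt7_general (D r : ℕ)
    (x x' : Fin 3 → ZMod (3 * D * r)) (g g' h h' : ℤ × ℤ)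
    (hg : g ∈ V2plus r) (hg' : g' ∈ V2plus r) (hh : h ∈ V2plus r) (hh' : h' ∈ V2plus r)
    (i j : ℕ) (hij : i + 2 ≤ j) (hj : j ≤ 2 * D)
    (hshare1 : cv2 (3 * D * r) x g g' i = cv2 (3 * D * r) x' h h' i)
    (hshare2 : cv2 (3 * D * r) x g g' j = cv2 (3 * D * r) x' h h' j) :
    x = x' ∧ g = h ∧ g' = h' := by
  obtain rfl : g = h := V2plus.eq_of_intCast_mul_fst_eq hg hh (by omega) (by omega)
    (intCast_mul_fst_eq_of_cv2_eq hshare1 hshare2)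
  obtain rfl : g' = h' := V2plus.eq_of_intCast_mul_snd_eq hg' hh' (by omega) (by omega)
    (intCast_mul_snd_eq_of_cv2_eq hshare1 hshare2)
  rw [cv2_eq_add, cv2_eq_add _ x'] at hshare1
  exact ⟨add_right_cancel hshare1, rfl, rfl⟩

/-- In `G_alt²`, two distinct critical paths cannot share two vertices
lying in layers `i` and `j` with `|i − j| ≥ 2`: if two critical paths agree in layers
`i` and `j ≥ i + 2`, then they are the same critical path. -/
theorem stmt7 (D r : ℕ) (hD : 0 < D) (hr : 0 < r)
    (x x' : Fin 3 → ZMod (3 * D * r)) (g g' h h' : ℤ × ℤ)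
    (hg : g ∈ V2plus r) (hg' : g' ∈ V2plus r) (hh : h ∈ V2plus r) (hh' : h' ∈ V2plus r)
    (i j : ℕ) (hij : i + 2 ≤ j) (hj : j ≤ 2 * D)
    (hshare1 : cv2 (3 * D * r) x g g' i = cv2 (3 * D * r) x' h h' i)
    (hshare2 : cv2 (3 * D * r) x g g' j = cv2 (3 * D * r) x' h h' j) :
    x = x' ∧ g = h ∧ g' = h' :=
  stmt7_general D r x x' g g' h h' hg hg' hh hh' i j hij hj hshare1 hshare2
end

section
/- In the alternation product graph G_alt³, two distinct critical paths cannot share two vertices lying in layers i and j with |i − j| ≥ 3; hence any pairwise intersection of critical paths is contained in a path of length at most 2. -/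
/-- The layer-`i` vertex of the critical path of `G_alt³` determined by start vertex
`x ∈ (ℤ/(3Dr)ℤ)⁴` and step vectors `g, g', g'' ∈ V₂⁺(r)`: among the first `i` steps,
`⌈i/3⌉ = (i+2)/3` are of type `0 (mod 3)` adding `g` to coordinates `(1,2)`,
`(i+1)/3` are of type `1 (mod 3)` adding `g'` to coordinates `(2,3)`, and
`⌊i/3⌋` are of type `2 (mod 3)` adding `g''` to coordinates `(3,4)`. -/
def cv3 (M : ℕ) (x : Fin 4 → ZMod M) (g g' g'' : ℤ × ℤ) (i : ℕ) : Fin 4 → ZMod M :=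
  ![x 0 + (((((i + 2) / 3 : ℕ) : ℤ) * g.1 : ℤ) : ZMod M),
    x 1 + (((((i + 2) / 3 : ℕ) : ℤ) * g.2 + (((i + 1) / 3 : ℕ) : ℤ) * g'.1 : ℤ) : ZMod M),
    x 2 + (((((i + 1) / 3 : ℕ) : ℤ) * g'.2 + ((i / 3 : ℕ) : ℤ) * g''.1 : ℤ) : ZMod M),
    x 3 + ((((i / 3 : ℕ) : ℤ) * g''.2 : ℤ) : ZMod M)]

section ExtremePoints

variable {𝕜 E : Type*} [Field 𝕜] [LinearOrder 𝕜] [IsStrictOrderedRing 𝕜]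
  [AddCommGroup E] [Module 𝕜 E]

lemma le_abs_of_mk_mem_extremePoints_left {A : Set (𝕜 × E)} {a b : 𝕜} {t : E}
    (ha : (a, t) ∈ A.extremePoints 𝕜) (hneg : (-b, t) ∈ A) (hpos : (b, t) ∈ A) : b ≤ |a| := by
  by_contra! hab
  have hseg : (a, t) ∈ openSegment 𝕜 (-b, t) (b, t) := by
    rw [← Prod.image_mk_openSegment_left, openSegment_eq_Ioo (by linarith [abs_nonneg a])]
    exact ⟨a, abs_lt.mp hab, rfl⟩
  have := congrArg Prod.fst ((mem_extremePoints.mp ha).2 _ hneg _ hpos hseg).1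
  linarith [neg_abs_le a]

lemma le_abs_of_mk_mem_extremePoints_right {A : Set (E × 𝕜)} {a b : 𝕜} {t : E}
    (ha : (t, a) ∈ A.extremePoints 𝕜) (hneg : (t, -b) ∈ A) (hpos : (t, b) ∈ A) : b ≤ |a| := by
  by_contra! hab
  have hseg : (t, a) ∈ openSegment 𝕜 (t, -b) (t, b) := by
    rw [← Prod.image_mk_openSegment_right, openSegment_eq_Ioo (by linarith [abs_nonneg a])]
    exact ⟨a, abs_lt.mp hab, rfl⟩
  have := congrArg Prod.snd ((mem_extremePoints.mp ha).2 _ hneg _ hpos hseg).1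
  linarith [neg_abs_le a]

end ExtremePoints

lemma intCast_mem_convexHull_latticeDisk {r : ℕ} {a b : ℤ} (h : a ^ 2 + b ^ 2 ≤ (r : ℤ) ^ 2) :
    ((a : ℝ), (b : ℝ)) ∈ convexHull ℝ (latticeDisk r) :=
  subset_convexHull ℝ _ ⟨(a, b), by exact_mod_cast h, rfl⟩

namespace V2plus

variable {r : ℕ} {p q : ℤ × ℤ}

lemma mem_iff : p ∈ V2plus r ↔ 0 ≤ p.1 ∧ 0 ≤ p.2 ∧
    ((p.1 : ℝ), (p.2 : ℝ)) ∈ (convexHull ℝ (latticeDisk r)).extremePoints ℝ :=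
  Iff.rfl

lemma sq_add_sq_le_s8 (hp : p ∈ V2plus r) : p.1 ^ 2 + p.2 ^ 2 ≤ (r : ℤ) ^ 2 := by
  obtain ⟨q, hq, hpq⟩ := extremePoints_convexHull_subset (mem_iff.mp hp).2.2
  simp only [Prod.mk.injEq, Int.cast_inj] at hpq
  rw [hpq.1, hpq.2]
  exact_mod_cast hq

lemma abs_fst_sub_le (hp : p ∈ V2plus r) (hq : q ∈ V2plus r) : |p.1 - q.1| ≤ r := by
  have := sq_add_sq_le_s8 hp; have := sq_add_sq_le_s8 hq
  obtain ⟨_, _, _⟩ := hp; obtain ⟨_, _, _⟩ := hq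
  rw [abs_le]; constructor <;> nlinarith

lemma abs_snd_sub_le (hp : p ∈ V2plus r) (hq : q ∈ V2plus r) : |p.2 - q.2| ≤ r := by
  have := sq_add_sq_le_s8 hp; have := sq_add_sq_le_s8 hq
  obtain ⟨_, _, _⟩ := hp; obtain ⟨_, _, _⟩ := hq
  rw [abs_le]; constructor <;> nlinarith

lemma injOn_fst : Set.InjOn Prod.fst (V2plus r) := by
  intro p hp q hq h
  wlog hle : p.2 ≤ q.2 generalizing p q
  · exact (this hq hp h.symm (le_of_not_ge hle)).symm
  refine Prod.ext h (hle.antisymm ?_)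
  obtain ⟨-, hp₂, hext⟩ := mem_iff.mp hp
  have hq' := sq_add_sq_le_s8 hq
  have hneg := intCast_mem_convexHull_latticeDisk (r := r) (a := p.1) (b := -q.2)
    (by rw [h, neg_sq]; exact hq')
  have hpos := intCast_mem_convexHull_latticeDisk (r := r) (a := p.1) (b := q.2)
    (by rw [h]; exact hq')
  rw [Int.cast_neg] at hneg
  have := le_abs_of_mk_mem_extremePoints_right hext hneg hpos
  rw [abs_of_nonneg (by exact_mod_cast hp₂)] at this
  exact_mod_cast this

lemma injOn_snd : Set.InjOn Prod.snd (V2plus r) := by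
  intro p hp q hq h
  wlog hle : p.1 ≤ q.1 generalizing p q
  · exact (this hq hp h.symm (le_of_not_ge hle)).symm
  refine Prod.ext (hle.antisymm ?_) h
  obtain ⟨hp₁, -, hext⟩ := mem_iff.mp hp
  have hq' := sq_add_sq_le_s8 hq
  have hneg := intCast_mem_convexHull_latticeDisk (r := r) (a := -q.1) (b := p.2)
    (by rw [h, neg_sq]; exact hq')
  have hpos := intCast_mem_convexHull_latticeDisk (r := r) (a := q.1) (b := p.2)
    (by rw [h]; exact hq')
  rw [Int.cast_neg] at hneg
  have := le_abs_of_mk_mem_extremePoints_left hext hneg hpos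
  rw [abs_of_nonneg (by exact_mod_cast hp₁)] at this
  exact_mod_cast this

end V2plus

lemma eq_of_natCast_mul_eq_natCast_mul {D r c : ℕ} {u v : ℤ} (hc : 0 < c) (hcD : c ≤ D)
    (huv : |u - v| ≤ r) (h : (c : ZMod (3 * D * r)) * u = c * v) : u = v := by
  by_contra hne
  have hdvd : ((3 * D * r : ℕ) : ℤ) ∣ c * (u - v) := by
    rw [← ZMod.intCast_zmod_eq_zero_iff_dvd]
    push_cast
    linear_combination h
  have hpos : 0 < |u - v| := abs_pos.mpr (sub_ne_zero.mpr hne)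
  have hlt : |(c : ℤ) * (u - v)| < ((3 * D * r : ℕ) : ℤ) := by
    rw [abs_mul, Nat.abs_cast]
    push_cast
    have : (c : ℤ) ≤ D := by exact_mod_cast hcD
    have : (0 : ℤ) < c := by exact_mod_cast hc
    nlinarith
  have := Int.eq_zero_of_abs_lt_dvd hdvd hlt
  simp [hc.ne', sub_eq_zero, hne] at this

lemma exists_div_three_eq_add {D i j : ℕ} (hij : i + 3 ≤ j) (hj : j < 3 * D + 3) :
    ∃ c, j / 3 = i / 3 + c ∧ 0 < c ∧ c ≤ D :=
  ⟨j / 3 - i / 3, by omega, by omega, by omega⟩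

lemma cv3_eq_add (M : ℕ) (x : Fin 4 → ZMod M) (g g' g'' : ℤ × ℤ) (i : ℕ) :
    cv3 M x g g' g'' i = x + cv3 M 0 g g' g'' i := by
  funext k
  fin_cases k <;> simp only [cv3, Pi.add_apply, Pi.zero_apply, zero_add] <;> rfl

lemma cv3_injective_start (M : ℕ) (g g' g'' : ℤ × ℤ) (i : ℕ) :
    Function.Injective fun x ↦ cv3 M x g g' g'' i := by
  intro x x' (h : cv3 M x g g' g'' i = cv3 M x' g g' g'' i)
  rw [cv3_eq_add M x, cv3_eq_add M x'] at h
  exact add_right_cancel h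

theorem stmt8_general (D r : ℕ)
    (x x' : Fin 4 → ZMod (3 * D * r)) (g g' g'' h h' h'' : ℤ × ℤ)
    (hg : g ∈ V2plus r) (hg' : g' ∈ V2plus r) (hg'' : g'' ∈ V2plus r)
    (hh : h ∈ V2plus r) (hh' : h' ∈ V2plus r) (hh'' : h'' ∈ V2plus r)
    (i j : ℕ) (hij : i + 3 ≤ j) (hj : j ≤ 3 * D)
    (hshare1 : cv3 (3 * D * r) x g g' g'' i = cv3 (3 * D * r) x' h h' h'' i)
    (hshare2 : cv3 (3 * D * r) x g g' g'' j = cv3 (3 * D * r) x' h h' h'' j) :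
    x = x' ∧ g = h ∧ g' = h' ∧ g'' = h'' := by
  obtain ⟨c₀, hc₀, hc₀pos, hc₀D⟩ := exists_div_three_eq_add (D := D) (i := i + 2) (j := j + 2)
    (by omega) (by omega)
  obtain ⟨c₁, hc₁, hc₁pos, hc₁D⟩ := exists_div_three_eq_add (D := D) (i := i + 1) (j := j + 1)
    (by omega) (by omega)
  obtain ⟨c₂, hc₂, hc₂pos, hc₂D⟩ := exists_div_three_eq_add (D := D) hij (by omega)
  have e₁ := congrFun hshare1
  have e₂ := congrFun hshare2
  have e₁₀ := e₁ 0; have e₁₁ := e₁ 1; have e₁₃ := e₁ 3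
  have e₂₀ := e₂ 0; have e₂₁ := e₂ 1; have e₂₃ := e₂ 3
  simp only [cv3, hc₀, hc₁, hc₂] at e₁₀ e₁₁ e₁₃ e₂₀ e₂₁ e₂₃
  push_cast at e₁₀ e₁₁ e₁₃ e₂₀ e₂₁ e₂₃
  obtain rfl : g = h := V2plus.injOn_fst hg hh <| eq_of_natCast_mul_eq_natCast_mul hc₀pos hc₀D
    (V2plus.abs_fst_sub_le hg hh) (by linear_combination e₂₀ - e₁₀)
  obtain rfl : g' = h' := V2plus.injOn_fst hg' hh' <| eq_of_natCast_mul_eq_natCast_mul hc₁pos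
    hc₁D (V2plus.abs_fst_sub_le hg' hh') (by linear_combination e₂₁ - e₁₁)
  obtain rfl : g'' = h'' := V2plus.injOn_snd hg'' hh'' <| eq_of_natCast_mul_eq_natCast_mul hc₂pos
    hc₂D (V2plus.abs_snd_sub_le hg'' hh'') (by linear_combination e₂₃ - e₁₃)
  exact ⟨cv3_injective_start _ g g' g'' i hshare1, rfl, rfl, rfl⟩

/-- In `G_alt³`, two distinct critical paths cannot share two vertices
lying in layers `i` and `j` with `|i − j| ≥ 3`: if two critical paths agree in layers
`i` and `j ≥ i + 3`, then they are the same critical path. Hence any pairwise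
intersection of critical paths is contained in a path of length at most 2. -/
theorem stmt8 (D r : ℕ) (hD : 0 < D) (hr : 0 < r)
    (x x' : Fin 4 → ZMod (3 * D * r)) (g g' g'' h h' h'' : ℤ × ℤ)
    (hg : g ∈ V2plus r) (hg' : g' ∈ V2plus r) (hg'' : g'' ∈ V2plus r)
    (hh : h ∈ V2plus r) (hh' : h' ∈ V2plus r) (hh'' : h'' ∈ V2plus r)
    (i j : ℕ) (hij : i + 3 ≤ j) (hj : j ≤ 3 * D)
    (hshare1 : cv3 (3 * D * r) x g g' g'' i = cv3 (3 * D * r) x' h h' h'' i)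
    (hshare2 : cv3 (3 * D * r) x g g' g'' j = cv3 (3 * D * r) x' h h' h'' j) :
    x = x' ∧ g = h ∧ g' = h' ∧ g'' = h'' :=
  stmt8_general D r x x' g g' g'' h h' h'' hg hg' hg'' hh hh' hh'' i j hij hj hshare1 hshare2
end
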